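/- The transformation matrix M encoding the pre-wavelet change of basis in one dimension is invertible: the (2^{t+1}−1)×(2^{t+1}−1) band matrix M with diagonal pattern built from the rows (9/10, 1/2, 1/10), (−3/5, 1, −3/5), (1/10, 1/2, 1, …) as in equation (matrixM) has nonzero determinant for every t ≥ 1. In particular for t = 1 the 3×3 matrix [[9/10, 1/2, 1/10],[−3/5, 1, −3/5],[1/10, 1/2, 9/10]] is invertible. -/

import Mathlib

/-- The `(2^{t+1}-1) × (2^{t+1}-1)` band matrix `M` of the pre-wavelet change of
basis in one dimension (1-based indices): even columns are interpolation columns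
`(1/2, 1, 1/2)`, interior odd columns are pre-wavelet columns
`(1/10, -3/5, 1, -3/5, 1/10)`, and the two boundary odd columns carry the
modified coefficients `(9/10, -3/5, 1/10)`. -/
noncomputable def Mband (t : ℕ) : Matrix (Fin (2 ^ (t + 1) - 1)) (Fin (2 ^ (t + 1) - 1)) ℝ :=
  Matrix.of fun i j =>
    let iv : ℤ := (i : ℤ) + 1
    let jv : ℤ := (j : ℤ) + 1
    if jv % 2 = 0 then
      (if iv = jv then 1 else if |iv - jv| = 1 then 1/2 else 0)
    else if jv = 1 then
      (if iv = 1 then 9/10 else if iv = 2 then -(3/5) else if iv = 3 then 1/10 else 0)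
    else if jv = 2 ^ (t + 1) - 1 then
      (if iv = jv then 9/10 else if iv = jv - 1 then -(3/5)
        else if iv = jv - 2 then 1/10 else 0)
    else
      (if iv = jv then 1 else if |iv - jv| = 1 then -(3/5)
        else if |iv - jv| = 2 then 1/10 else 0)

/-!
If `v M = 0`, every column of `M` is a linear relation among at most five consecutive entries
of `v`. The interpolation columns (even `j`) read `v (j-1) + 2 v j + v (j+1) = 0`; eliminating
the even entries with them turns the remaining columns into the tridiagonal system
`y (k-1) + 4 y k + y (k+1) = 0` (with `3` instead of `4` at the two boundary columns) for the
odd entries `y k = v (2k-1)`. That system is strictly diagonally dominant, so `y = 0`, and then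
the even entries vanish as well.
-/

open Function Finset Matrix

lemma eq_zero_of_tridiagonal_dominant {Y a : ℤ → ℝ} {s : Finset ℤ}
    (hY : ∀ k ∉ s, Y k = 0) (ha : ∀ k ∈ s, 2 < |a k|)
    (h : ∀ k ∈ s, Y (k - 1) + a k * Y k + Y (k + 1) = 0) (k : ℤ) : Y k = 0 := by
  rcases s.eq_empty_or_nonempty with rfl | hs
  · exact hY k (notMem_empty k)
  obtain ⟨k₀, hk₀, hmax⟩ := s.exists_max_image (fun k => |Y k|) hs
  have hle : ∀ k, |Y k| ≤ |Y k₀| := fun k => by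
    by_cases hk : k ∈ s
    · exact hmax k hk
    · simp [hY k hk]
  have hk₀_zero : |Y k₀| = 0 := by
    have : |a k₀| * |Y k₀| ≤ 2 * |Y k₀| := by
      calc |a k₀| * |Y k₀| = |Y (k₀ - 1) + Y (k₀ + 1)| := by
            rw [← abs_mul, ← abs_neg]; congr 1; linarith [h k₀ hk₀]
        _ ≤ 2 * |Y k₀| := by
            linarith [abs_add_le (Y (k₀ - 1)) (Y (k₀ + 1)), hle (k₀ - 1), hle (k₀ + 1)]
    nlinarith [ha k₀ hk₀, abs_nonneg (Y k₀)]
  exact abs_eq_zero.mp (le_antisymm (hk₀_zero ▸ hle k) (abs_nonneg _))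

lemma sum_mul_comp_sub_eq_sum_extend {ι : Type*} [Fintype ι] {e : ι → ℤ} (he : Injective e)
    (g : ι → ℝ) {c : ℤ → ℝ} {S : Finset ℤ} (hc : support c ⊆ S) (j : ℤ) :
    ∑ i, g i * c (e i - j) = ∑ d ∈ S, extend e g 0 (j + d) * c d := by
  set F : ℤ → ℝ := fun k => extend e g 0 k * c (k - j)
  have hF : support F ⊆ (Finset.univ.map ⟨e, he⟩ : Finset ℤ) := by
    intro k hk
    by_contra hke
    refine hk ?_
    have hk0 : extend e g 0 k = 0 :=
      extend_apply' g (0 : ℤ → ℝ) k fun ⟨i, hi⟩ => hke (by simp [← hi])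
    simp [F, hk0]
  calc ∑ i, g i * c (e i - j) = ∑ᶠ k, F k := by
        rw [finsum_eq_finsetSum_of_support_subset F hF, Finset.sum_map]
        simp [F, he.extend_apply]
    _ = ∑ᶠ d, extend e g 0 (j + d) * c d := by
        rw [← finsum_comp_equiv (Equiv.addLeft j)]
        simp [F]
    _ = ∑ d ∈ S, extend e g 0 (j + d) * c d :=
        finsum_eq_finsetSum_of_support_subset _ fun d hd => hc (right_ne_zero_of_mul hd)

noncomputable def interpStencil (d : ℤ) : ℝ :=
  if d = 0 then 1 else if |d| = 1 then 1/2 else 0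

noncomputable def waveletStencil (d : ℤ) : ℝ :=
  if d = 0 then 1 else if |d| = 1 then -(3/5) else if |d| = 2 then 1/10 else 0

noncomputable def boundaryStencil (d : ℤ) : ℝ :=
  if d = 0 then 9/10 else if d = 1 then -(3/5) else if d = 2 then 1/10 else 0

/-- Column `j` of `M` (1-based, size `N`) as a function of the row offset `i - j`. -/
noncomputable def columnStencil (N j d : ℤ) : ℝ :=
  if j % 2 = 0 then interpStencil d
  else if j = 1 then boundaryStencil d
  else if j = N then boundaryStencil (-d)
  else waveletStencil d

noncomputable def preWaveletMatrix (N : ℕ) : Matrix (Fin N) (Fin N) ℝ :=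
  Matrix.of fun i j => columnStencil N ((j : ℤ) + 1) ((i : ℤ) - j)

lemma support_columnStencil_subset (N j : ℤ) : support (columnStencil N j) ⊆ Icc (-2) 2 := by
  intro d hd
  simp only [mem_support, columnStencil, interpStencil, waveletStencil, boundaryStencil,
    abs_eq (zero_le_one' ℤ), abs_eq (by norm_num : (0 : ℤ) ≤ 2)] at hd
  simp only [coe_Icc, Set.mem_Icc]
  split_ifs at hd <;> first | (exfalso; exact hd rfl) | omega

lemma Mband_eq_preWaveletMatrix (t : ℕ) : Mband t = preWaveletMatrix (2 ^ (t + 1) - 1) := by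
  have hN : ((2 ^ (t + 1) - 1 : ℕ) : ℤ) = 2 ^ (t + 1) - 1 := by
    have := Nat.one_le_two_pow (n := t + 1); push_cast [Nat.cast_sub this]; rfl
  ext i j
  simp only [Mband, preWaveletMatrix, of_apply, columnStencil, interpStencil, waveletStencil,
    boundaryStencil, hN, abs_eq (zero_le_one' ℤ), abs_eq (by norm_num : (0 : ℤ) ≤ 2)]
  split_ifs <;> first | rfl | (exfalso; omega)

lemma sum_Icc_neg_two_two (f : ℤ → ℝ) :
    ∑ d ∈ Icc (-2 : ℤ) 2, f d = f (-2) + f (-1) + f 0 + f 1 + f 2 := by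
  rw [show Icc (-2 : ℤ) 2 = {-2, -1, 0, 1, 2} by rfl]
  simp [sum_insert]
  ring

section Columns

variable (N : ℤ) (V : ℤ → ℝ)

lemma sum_mul_columnStencil_of_even {j : ℤ} (hj : j % 2 = 0) :
    ∑ d ∈ Icc (-2) 2, V (j + d) * columnStencil N j d =
      (V (j - 1) + 2 * V j + V (j + 1)) / 2 := by
  norm_num [sum_Icc_neg_two_two, columnStencil, interpStencil, hj, ← sub_eq_add_neg]
  ring

lemma sum_mul_columnStencil_one :
    ∑ d ∈ Icc (-2) 2, V (1 + d) * columnStencil N 1 d = (9 * V 1 - 6 * V 2 + V 3) / 10 := by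
  norm_num [sum_Icc_neg_two_two, columnStencil, boundaryStencil]
  ring

lemma sum_mul_columnStencil_self (hN : N % 2 = 1) (hN1 : N ≠ 1) :
    ∑ d ∈ Icc (-2) 2, V (N + d) * columnStencil N N d =
      (V (N - 2) - 6 * V (N - 1) + 9 * V N) / 10 := by
  norm_num [sum_Icc_neg_two_two, columnStencil, boundaryStencil, hN, hN1, ← sub_eq_add_neg]
  ring

lemma sum_mul_columnStencil_of_odd {j : ℤ} (hj : j % 2 = 1) (hj1 : j ≠ 1) (hjN : j ≠ N) :
    ∑ d ∈ Icc (-2) 2, V (j + d) * columnStencil N j d =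
      (V (j - 2) - 6 * V (j - 1) + 10 * V j - 6 * V (j + 1) + V (j + 2)) / 10 := by
  norm_num [sum_Icc_neg_two_two, columnStencil, waveletStencil, hj, hj1, hjN, ← sub_eq_add_neg]
  ring

end Columns

def ColumnEquations (N : ℤ) (V : ℤ → ℝ) : Prop :=
  ∀ j, 1 ≤ j → j ≤ N → ∑ d ∈ Icc (-2) 2, V (j + d) * columnStencil N j d = 0

namespace ColumnEquations

variable {N : ℤ} {V : ℤ → ℝ}

lemma even_relation (hcol : ColumnEquations N V) {j : ℤ} (hj : j % 2 = 0) (h1 : 1 ≤ j)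
    (hjN : j ≤ N) :
    V (j - 1) + 2 * V j + V (j + 1) = 0 := by
  have := hcol j h1 hjN
  rw [sum_mul_columnStencil_of_even N V hj] at this
  linarith

lemma odd_recurrence (hcol : ColumnEquations N V) (hN : N % 2 = 1) (h3 : 3 ≤ N)
    (hV : ∀ k, k < 1 ∨ N < k → V k = 0)
    {j : ℤ} (hj : j % 2 = 1) (h1 : 1 ≤ j) (hjN : j ≤ N) :
    V (j - 2) + (if j = 1 ∨ j = N then 3 else 4) * V j + V (j + 2) = 0 := by
  by_cases hj_one : j = 1
  · subst hj_one
    have hcol1 := hcol 1 le_rfl (by omega)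
    have e := hcol.even_relation (j := 2) rfl (by norm_num) (by omega)
    rw [sum_mul_columnStencil_one] at hcol1
    norm_num [hV (-1) (by omega)] at e ⊢
    linarith
  by_cases hj_end : j = N
  · subst hj_end
    have hcolN := hcol j h1 le_rfl
    have e := hcol.even_relation (j := j - 1) (by omega) (by omega) (by omega)
    rw [sum_mul_columnStencil_self j V hj hj_one] at hcolN
    rw [sub_sub, sub_add_cancel] at e
    norm_num [hV (j + 2) (by omega), hj_one] at e ⊢
    linarith
  · have hcolj := hcol j h1 hjN
    have e₁ := hcol.even_relation (j := j - 1) (by omega) (by omega) (by omega)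
    have e₂ := hcol.even_relation (j := j + 1) (by omega) (by omega) (by omega)
    rw [sum_mul_columnStencil_of_odd N V hj hj_one hj_end] at hcolj
    rw [sub_sub, sub_add_cancel] at e₁
    rw [add_sub_cancel_right, add_assoc j 1 1] at e₂
    norm_num [hj_one, hj_end] at e₁ e₂ ⊢
    linarith

theorem eq_zero (hcol : ColumnEquations N V) (hN : N % 2 = 1) (h3 : 3 ≤ N)
    (hV : ∀ k, k < 1 ∨ N < k → V k = 0) (k : ℤ) : V k = 0 := by
  have hodd : ∀ k, V (2 * k - 1) = 0 := by
    refine eq_zero_of_tridiagonal_dominant (Y := fun k => V (2 * k - 1))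
      (s := Icc 1 ((N + 1) / 2))
      (a := fun k => if 2 * k - 1 = 1 ∨ 2 * k - 1 = N then 3 else 4) ?_ ?_ ?_
    · intro k hk
      exact hV _ (by simp only [mem_Icc] at hk; omega)
    · intro k _
      split_ifs <;> norm_num
    · intro k hk
      simp only [mem_Icc] at hk
      have := hcol.odd_recurrence hN h3 hV (j := 2 * k - 1) (by omega) (by omega) (by omega)
      convert this using 3 <;> ring_nf
  rcases Int.emod_two_eq k with hk | hk
  · by_cases hkN : k < 1 ∨ N < k
    · exact hV k hkN
    have e := hcol.even_relation hk (by omega) (by omega)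
    rw [show k - 1 = 2 * (k / 2) - 1 by omega, show k + 1 = 2 * (k / 2 + 1) - 1 by omega,
      hodd, hodd] at e
    linarith
  · rw [show k = 2 * ((k + 1) / 2) - 1 by omega]
    exact hodd _

end ColumnEquations

lemma vecMul_preWaveletMatrix_apply {N : ℕ} (v : Fin N → ℝ) (j : Fin N) :
    (v ᵥ* preWaveletMatrix N) j = ∑ d ∈ Icc (-2) 2,
      extend (fun i : Fin N => (i : ℤ) + 1) v 0 ((j : ℤ) + 1 + d) *
        columnStencil N ((j : ℤ) + 1) d := by
  rw [← sum_mul_comp_sub_eq_sum_extend (fun a b h => Fin.ext (by simpa using h)) v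
    (support_columnStencil_subset N _)]
  simp [vecMul, dotProduct, preWaveletMatrix]

theorem preWaveletMatrix_det_ne_zero {N : ℕ} (hN : Odd N) (h3 : 3 ≤ N) :
    (preWaveletMatrix N).det ≠ 0 := by
  intro h0
  obtain ⟨v, hv0, hv⟩ := exists_vecMul_eq_zero_iff.mpr h0
  have hinj : Injective fun i : Fin N => (i : ℤ) + 1 := fun a b h => Fin.ext (by simpa using h)
  have hcol : ColumnEquations N (extend (fun i : Fin N => (i : ℤ) + 1) v 0) := by
    intro j h1 h2
    obtain ⟨n, rfl⟩ : ∃ n : ℕ, j = n + 1 := ⟨(j - 1).toNat, by omega⟩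
    have := congrFun hv ⟨n, by omega⟩
    rwa [vecMul_preWaveletMatrix_apply] at this
  have hsupp : ∀ k : ℤ, k < 1 ∨ N < k → extend (fun i : Fin N => (i : ℤ) + 1) v 0 k = 0 :=
    fun k hk => extend_apply' v (0 : ℤ → ℝ) k (by rintro ⟨i, rfl⟩; omega)
  refine hv0 (funext fun i => ?_)
  rw [Pi.zero_apply, ← hinj.extend_apply v 0 i]
  exact hcol.eq_zero (by rcases hN with ⟨n, rfl⟩; omega) (by exact_mod_cast h3) hsupp _

/-- The pre-wavelet transformation matrix `M` is invertible for every `t ≥ 1`;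
in particular for `t = 1` the explicit `3 × 3` matrix
`[[9/10, 1/2, 1/10], [-3/5, 1, -3/5], [1/10, 1/2, 9/10]]` is invertible. -/
theorem Mband_invertible :
    (∀ t : ℕ, 1 ≤ t → (Mband t).det ≠ 0) ∧
    (!![(9:ℝ)/10, 1/2, 1/10; -(3/5), 1, -(3/5); 1/10, 1/2, 9/10]).det ≠ 0 := by
  refine ⟨fun t ht => ?_, by simp [det_fin_three]; norm_num⟩
  rw [Mband_eq_preWaveletMatrix]
  have hpow : 2 ^ (t + 1) = 2 * 2 ^ t := pow_succ' 2 t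
  have hgt : 1 < 2 ^ t := Nat.one_lt_two_pow (by omega)
  exact preWaveletMatrix_det_ne_zero ⟨2 ^ t - 1, by omega⟩ (by omega)
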